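/- Let f∈𝒦. Then for every φ∈ℓ²_fin(ℕ), f(N)(1−L*)Δ_1(f,N)^{-1}(1−L*)φ ∈ (1−L*)ℓ²_fin(ℕ); equivalently, on ℓ²_fin(ℕ) one has the operator identity f(N)(1−L*)Δ_1(f,N)^{-1}(1−L*) = (1−L*)(f(N)Δ_1(f,N)^{-1}(1−L*) − L*). -/
import Mathlib


noncomputable section

/-- The class 𝒦. -/
def MemK (f : ℕ → ℝ) : Prop := 0 < f 0 ∧ ∀ n, f n < f (n + 1)

/-- The right shift `L*` on sequences: `(L* ψ)(0) = 0`, `(L* ψ)(n+1) = ψ n`. -/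
def Lstar (ψ : ℕ → ℂ) : ℕ → ℂ := fun n => if n = 0 then 0 else ψ (n - 1)

/-- The operator `1 - L*` on sequences. -/
def oneSubLstar (ψ : ℕ → ℂ) : ℕ → ℂ := fun n => ψ n - Lstar ψ n

/-- The diagonal operator `Δ₁(f, N)⁻¹ : ψ(n) ↦ ψ(n) / (f(n+1) - f(n))`. -/
def d1inv (f : ℕ → ℝ) (ψ : ℕ → ℂ) : ℕ → ℂ := fun n => ψ n / ((f (n + 1) - f n : ℝ) : ℂ)

/-- The multiplication operator `f(N)` on sequences. -/
def mulSeq (f : ℕ → ℝ) (ψ : ℕ → ℂ) : ℕ → ℂ := fun n => ((f n : ℝ) : ℂ) * ψ n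

/-- Let `f ∈ 𝒦`. Then for every finitely supported `φ`,
`f(N)(1 - L*) Δ₁(f,N)⁻¹ (1 - L*) φ ∈ (1 - L*) ℓ²_fin(ℕ)`; indeed one has the operator
identity `f(N)(1 - L*) Δ₁(f,N)⁻¹ (1 - L*) = (1 - L*)(f(N) Δ₁(f,N)⁻¹ (1 - L*) - L*)` on
`ℓ²_fin(ℕ)`. -/
theorem stmt19 (f : ℕ → ℝ) (hf : MemK f) :
    ∀ φ : ℕ → ℂ, (Function.support φ).Finite →
      (∃ χ : ℕ → ℂ, (Function.support χ).Finite ∧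
          mulSeq f (oneSubLstar (d1inv f (oneSubLstar φ))) = oneSubLstar χ) ∧
      mulSeq f (oneSubLstar (d1inv f (oneSubLstar φ)))
        = oneSubLstar (fun n => mulSeq f (d1inv f (oneSubLstar φ)) n - Lstar φ n) := by

  intro φ hφ
  have hne : ∀ n, ((f (n+1) - f n : ℝ) : ℂ) ≠ 0 := by
    intro n
    exact_mod_cast sub_ne_zero.mpr (hf.2 n).ne'
  have key : mulSeq f (oneSubLstar (d1inv f (oneSubLstar φ)))
      = oneSubLstar (fun n => mulSeq f (d1inv f (oneSubLstar φ)) n - Lstar φ n) := by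
    funext n
    cases n with
    | zero => simp [mulSeq, oneSubLstar, Lstar, d1inv]
    | succ m =>
      have h1 : ((f (m+1) : ℝ) : ℂ) - ((f m : ℝ) : ℂ) ≠ 0 := by
        have := hne m; push_cast at this; exact this
      have h2 : ((f (m+2) : ℝ) : ℂ) - ((f (m+1) : ℝ) : ℂ) ≠ 0 := by
        have := hne (m+1); push_cast at this; exact this
      cases m with
      | zero =>
        simp only [mulSeq, oneSubLstar, Lstar, d1inv, Nat.succ_ne_zero, if_false,
          Nat.add_sub_cancel, if_pos rfl]
        push_cast
        field_simp
        ring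
      | succ k =>
        have h0 : ((f (k+1) : ℝ) : ℂ) - ((f k : ℝ) : ℂ) ≠ 0 := by
          have := hne k; push_cast at this; exact this
        simp only [mulSeq, oneSubLstar, Lstar, d1inv, Nat.succ_ne_zero, if_false,
          Nat.add_sub_cancel]
        push_cast
        field_simp
        ring
  refine ⟨⟨fun n => mulSeq f (d1inv f (oneSubLstar φ)) n - Lstar φ n, ?_, key⟩, key⟩
  have hsub : Function.support (fun n => mulSeq f (d1inv f (oneSubLstar φ)) n - Lstar φ n)
      ⊆ Function.support φ ∪ (fun n => n + 1) '' Function.support φ := by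
    intro n hn
    by_contra hc
    simp only [Set.mem_union, Set.mem_image, Function.mem_support, not_or, not_exists,
      not_and] at hc
    apply hn
    have hφn : φ n = 0 := by
      by_contra h; exact hc.1 h
    have hφp : Lstar φ n = 0 := by
      unfold Lstar
      rcases n with _ | m
      · simp
      · simp only [Nat.succ_ne_zero, if_false, Nat.add_sub_cancel]
        by_contra h
        exact hc.2 m h rfl
    have hA : oneSubLstar φ n = 0 := by
      simp [oneSubLstar, hφn, hφp]
    simp [mulSeq, d1inv, hA, hφp]
  exact (hφ.union (hφ.image _)).subset hsub
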